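/- arXiv:2410.20758 — 2 statements merged into one kernel-verified Lean document; each statement's English description precedes it below -/
import Mathlib

section
/- Let c > 0 and z ∈ ℂ. Let 𝒞 be the Hankel contour consisting of the lower edge of the cut from −∞ to −δ, the circle t = δe^{iφ}, −π ≤ φ ≤ π, and the upper edge of the cut from −δ back to −∞ (for any δ > 0). Then (1/(2πi)) ∫_𝒞 t^{−z} e^{ct} dt = c^{z−1}/Γ(z). -/
/-
On the two edges of the cut `t^{-z} = e^{± iπz} u^{-z}`, so together they contribute
`(e^{iπz} - e^{-iπz}) T(z) = 2i sin(πz) T(z)` with `T(z) = ∫_δ^∞ u^{-z} e^{-cu} du`.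
On the circle we expand `e^{ct}` and integrate termwise; for `z ∉ {1, 2, …}` this gives
`2i sin(πz) S(z)`, where `S(z) = ∑ (-cδ)^n δ^{1-z} / (n! (n + 1 - z))` is the termwise integral
of `∫_0^δ u^{-z} e^{-cu} du`. Hence for `Re z < 1`,
`T(z) + S(z) = ∫_0^∞ u^{-z} e^{-cu} du = c^{z-1} Γ(1 - z)`. Integration by parts, resp. a
telescoping of the series, shows that `T + S` satisfies the recurrence `(1 - z) F(z) = c F(z - 1)`
of `c^{z-1} Γ(1 - z)`, which extends the identity to all `z ∉ {1, 2, …}`; Euler's reflection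
formula `sin(πz) Γ(1 - z) = π / Γ(z)` finishes. For `z = k + 1` the edge integrals cancel and only
the term `n = k` of the circle series, `2πi c^k / k!`, survives.
-/

open MeasureTheory Set Filter Complex intervalIntegral
open scoped Real Topology Interval

namespace Hankel

variable {c δ : ℝ} {z : ℂ}

theorem hasSum_pow_div_factorial_mul (x y : ℂ) :
    HasSum (fun n : ℕ => x ^ n / n.factorial * y) (exp x * y) := by
  rw [Complex.exp_eq_exp_ℂ]
  exact (NormedSpace.expSeries_div_hasSum_exp x).mul_right y

theorem hasSum_intervalIntegral_mul_exp {g h : ℝ → ℂ} {a b : ℝ}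
    (hg : IntervalIntegrable g volume a b) (hh : ContinuousOn h [[a, b]]) :
    HasSum (fun n : ℕ => ∫ x in a..b, g x * (h x ^ n / n.factorial))
      (∫ x in a..b, g x * exp (h x)) := by
  obtain ⟨R, hR⟩ := isCompact_uIcc.exists_bound_of_continuousOn hh
  have hsub : Ι a b ⊆ [[a, b]] := uIoc_subset_uIcc
  have hsum (x : ℝ) : HasSum (fun n : ℕ => ‖g x‖ * (R ^ n / n.factorial)) (‖g x‖ * Real.exp R) := by
    rw [Real.exp_eq_exp_ℝ]
    exact (NormedSpace.expSeries_div_hasSum_exp R).mul_left _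
  refine hasSum_integral_of_dominated_convergence (fun n x => ‖g x‖ * (R ^ n / n.factorial))
    (fun n => ?_) (fun n => ae_of_all _ fun x hx => ?_) (ae_of_all _ fun x _ => (hsum x).summable)
    ?_ (ae_of_all _ fun x _ => ?_)
  · exact hg.def'.aestronglyMeasurable.mul
      (((hh.mono hsub).pow n).div_const _ |>.aestronglyMeasurable measurableSet_uIoc)
  · rw [norm_mul, norm_div, norm_pow, Complex.norm_natCast]
    gcongr
    exact hR x (hsub hx)
  · simp_rw [(hsum _).tsum_eq]
    exact hg.norm.mul_const _
  · rw [Complex.exp_eq_exp_ℂ]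
    exact (NormedSpace.expSeries_div_hasSum_exp (h x)).mul_left (g x)

theorem ofReal_cpow_eq_exp_mul_log {u : ℝ} (hu : 0 < u) (s : ℂ) :
    (u : ℂ) ^ s = exp (s * Real.log u) := by
  rw [cpow_def_of_ne_zero (ofReal_ne_zero.2 hu.ne'), ofReal_log hu.le, mul_comm]

theorem exp_mul_I_sub_exp_neg_mul_I (x : ℂ) : exp (x * I) - exp (-x * I) = 2 * I * sin x := by
  rw [← cos_add_sin_I, ← cos_sub_sin_I]
  ring

theorem integral_exp_mul_I {a : ℂ} (ha : a ≠ 0) :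
    ∫ φ in (-π)..π, exp (a * φ * I) = 2 * sin (π * a) / a := by
  simp_rw [mul_right_comm a _ I]
  rw [integral_exp_mul_complex (mul_ne_zero ha I_ne_zero), ofReal_neg,
    show a * I * π = (π * a) * I by ring, show a * I * -π = -(π * a) * I by ring,
    exp_mul_I_sub_exp_neg_mul_I]
  field_simp

theorem sin_mul_Gamma_one_sub (hz : ∀ n : ℕ, z ≠ n + 1) :
    sin (π * z) * Gamma (1 - z) = π / Gamma z := by
  by_cases hΓ : Gamma z = 0
  -- At the poles `z = -m` Mathlib sets `Gamma z = 0`, so both sides vanish.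
  · obtain ⟨m, rfl⟩ := (Gamma_eq_zero_iff _).1 hΓ
    rw [hΓ, div_zero, mul_neg, sin_neg, mul_comm (π : ℂ), sin_nat_mul_pi, neg_zero, zero_mul]
  · have hrefl := Gamma_mul_Gamma_one_sub z
    have hsin : sin (π * z) ≠ 0 := fun h => by
      rw [h, div_zero, mul_eq_zero] at hrefl
      obtain ⟨m, hm⟩ := (Gamma_eq_zero_iff _).1 (hrefl.resolve_left hΓ)
      exact hz m (by linear_combination -hm)
    rw [eq_div_iff hΓ, mul_assoc, mul_comm (Gamma _), hrefl]
    field_simp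

theorem norm_ofReal_cpow_mul_exp {u : ℝ} (hu : 0 < u) (s : ℂ) :
    ‖(u : ℂ) ^ s * exp (-c * u)‖ = u ^ s.re * Real.exp (-c * u) := by
  rw [norm_mul, norm_cpow_eq_rpow_re_of_pos hu, Complex.norm_exp]
  norm_cast

theorem continuousOn_ofReal_cpow_mul_exp (s : ℂ) :
    ContinuousOn (fun u : ℝ => (u : ℂ) ^ s * exp (-c * u)) (Ioi 0) := fun u hu =>
  ((continuousAt_ofReal_cpow_const u s (Or.inr (ne_of_gt hu))).mul
    (by fun_prop)).continuousWithinAt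

theorem tendsto_ofReal_cpow_mul_exp_atTop (hc : 0 < c) (s : ℂ) :
    Tendsto (fun u : ℝ => (u : ℂ) ^ s * exp (-c * u)) atTop (𝓝 0) := by
  refine squeeze_zero_norm' ?_ (tendsto_rpow_mul_exp_neg_mul_atTop_nhds_zero s.re c hc)
  filter_upwards [eventually_gt_atTop 0] with u hu
  rw [norm_ofReal_cpow_mul_exp hu]

theorem integrableOn_Ioi_ofReal_cpow_mul_exp (hc : 0 < c) (hδ : 0 < δ) (s : ℂ) :
    IntegrableOn (fun u : ℝ => (u : ℂ) ^ s * exp (-c * u)) (Ioi δ) := by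
  have hdecay : (fun u : ℝ => (u : ℂ) ^ s * exp (-c * u)) =O[atTop]
      fun u => Real.exp (-(c / 2) * u) := by
    have hsmall := (tendsto_rpow_mul_exp_neg_mul_atTop_nhds_zero s.re _ (half_pos hc)).isBigO_one ℝ
    refine Asymptotics.isBigO_norm_left.mp ((hsmall.mul (Asymptotics.isBigO_refl
      (fun u => Real.exp (-(c / 2) * u)) atTop)).congr' ?_ (by simp))
    filter_upwards [eventually_gt_atTop 0] with u hu
    rw [norm_ofReal_cpow_mul_exp hu, mul_assoc, ← Real.exp_add]
    ring_nf
  exact (((continuousOn_ofReal_cpow_mul_exp s).mono fun u hu => hδ.trans_le hu).locallyIntegrableOn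
    measurableSet_Ici |>.integrableOn_of_isBigO_atTop hdecay
    ⟨Ioi δ, Ioi_mem_atTop δ, exp_neg_integrableOn_Ioi δ (half_pos hc)⟩).mono_set Ioi_subset_Ici_self

noncomputable def tailIntegral (c δ : ℝ) (w : ℂ) : ℂ :=
  ∫ u in Ioi δ, (u : ℂ) ^ (-w) * exp (-c * u)

theorem tailIntegral_recurrence (hc : 0 < c) (hδ : 0 < δ) (z : ℂ) :
    (1 - z) * tailIntegral c δ z - c * tailIntegral c δ (z - 1) =
      -((δ : ℂ) ^ (1 - z) * exp (-c * δ)) := by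
  have hderiv (u : ℝ) (hu : u ∈ Ici δ) :
      HasDerivAt (fun u : ℝ => (u : ℂ) ^ (1 - z) * exp (-c * u))
        ((1 - z) * ((u : ℂ) ^ (-z) * exp (-c * u)) -
          c * ((u : ℂ) ^ (-(z - 1)) * exp (-c * u))) u := by
    have hpow := ((hasDerivAt_id (u : ℂ)).cpow_const (c := 1 - z)
      (ofReal_mem_slitPlane.2 (hδ.trans_le hu))).comp_ofReal
    have hexp := (((hasDerivAt_id (u : ℂ)).const_mul (-(c : ℂ))).cexp).comp_ofReal
    simp only [id, mul_one] at hpow hexp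
    refine (hpow.mul hexp).congr_deriv ?_
    rw [show 1 - z - 1 = -z by ring, show -(z - 1) = 1 - z by ring]
    ring
  have hint (w : ℂ) := integrableOn_Ioi_ofReal_cpow_mul_exp hc hδ (-w)
  have := integral_Ioi_of_hasDerivAt_of_tendsto' hderiv (((hint z).const_mul _).sub
    ((hint (z - 1)).const_mul _)) (tendsto_ofReal_cpow_mul_exp_atTop hc _)
  rwa [integral_sub ((hint z).const_mul _) ((hint (z - 1)).const_mul _),
    MeasureTheory.integral_const_mul, MeasureTheory.integral_const_mul, zero_sub] at this

noncomputable def headTerm (c δ : ℝ) (w : ℂ) (n : ℕ) : ℂ :=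
  (-c * δ : ℂ) ^ n / n.factorial * (δ : ℂ) ^ (1 - w) / (n + 1 - w)

noncomputable def headSeries (c δ : ℝ) (w : ℂ) : ℂ := ∑' n, headTerm c δ w n

theorem summable_headTerm (w : ℂ) : Summable (headTerm c δ w) := by
  have hinv : Tendsto (fun n : ℕ => ((n : ℂ) + 1 - w)⁻¹) atTop (𝓝 0) :=
    tendsto_inv₀_cobounded.comp <| (tendsto_sub_const_cobounded w).comp <|
      (tendsto_add_const_cobounded 1).comp tendsto_natCast_atTop_cobounded
  exact summable_of_isBigO_nat' (hasSum_pow_div_factorial_mul (-c * δ) ((δ : ℂ) ^ (1 - w))).summable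
    (((Asymptotics.isBigO_refl _ atTop).mul (hinv.isBigO_one ℂ)).congr
      (fun n => by simp only [headTerm]; ring) fun n => mul_one _)

theorem headSeries_recurrence (hδ : δ ≠ 0) (hz : ∀ n : ℕ, z ≠ n + 1) :
    (1 - z) * headSeries c δ z - c * headSeries c δ (z - 1) =
      (δ : ℂ) ^ (1 - z) * exp (-c * δ) := by
  have hδ' : (δ : ℂ) ≠ 0 := ofReal_ne_zero.2 hδ
  have hden (n : ℕ) : (n : ℂ) + 1 - z ≠ 0 := fun h => hz n (by linear_combination -h)
  set t : ℕ → ℂ := fun n => (-c * δ : ℂ) ^ n / n.factorial * (δ : ℂ) ^ (1 - z)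
  set r : ℕ → ℂ := fun n => t n * n / (n + 1 - z) with hr_def
  have hterm (n : ℕ) : (1 - z) * headTerm c δ z n = t n - r n := by
    simp only [headTerm, t, r]
    field_simp [hden n]
    ring
  have hterm_pred (n : ℕ) : c * headTerm c δ (z - 1) n = -r (n + 1) := by
    simp only [headTerm, t, r]
    rw [show (n : ℂ) + 1 - (z - 1) = ((n + 1 : ℕ) : ℂ) + 1 - z by push_cast; ring,
      show (1 : ℂ) - (z - 1) = 1 + (1 - z) by ring, cpow_add _ _ hδ', cpow_one,
      Nat.factorial_succ, pow_succ]
    generalize ((n + 1 : ℕ) : ℂ) + 1 - z = D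
    push_cast
    field_simp
  have ht := hasSum_pow_div_factorial_mul (-c * δ) ((δ : ℂ) ^ (1 - z))
  have hr : Summable r :=
    (ht.summable.sub ((summable_headTerm z).mul_left (1 - z))).congr fun n => by rw [hterm]; ring
  calc (1 - z) * headSeries c δ z - c * headSeries c δ (z - 1)
      = ∑' n, (t n - r n) + ∑' n, r (n + 1) := by
        simp only [headSeries, ← tsum_mul_left, hterm, hterm_pred, tsum_neg, sub_neg_eq_add]
    _ = ∑' n, t n - r 0 := by
        rw [ht.summable.tsum_sub hr, hr.tsum_eq_zero_add]
        ring
    _ = (δ : ℂ) ^ (1 - z) * exp (-c * δ) := by simpa [hr_def, t, mul_comm] using ht.tsum_eq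

theorem hasSum_headTerm (hδ : 0 < δ) (hz : z.re < 1) :
    HasSum (headTerm c δ z) (∫ u in (0 : ℝ)..δ, (u : ℂ) ^ (-z) * exp (-c * u)) := by
  have hδ' : (δ : ℂ) ≠ 0 := ofReal_ne_zero.2 hδ.ne'
  convert hasSum_intervalIntegral_mul_exp (intervalIntegrable_cpow' (r := -z) (by simpa))
    (h := fun u : ℝ => -c * u) (by fun_prop) using 1
  ext n
  have hre : -1 < ((n : ℂ) - z).re := by
    simp only [sub_re, natCast_re, neg_lt_sub_iff_lt_add]
    linarith
  have hne : (n : ℂ) + 1 - z ≠ 0 := fun h => by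
    have := congrArg re h
    simp only [sub_re, add_re, natCast_re, one_re, zero_re] at this
    linarith
  calc headTerm c δ z n
      = (-c : ℂ) ^ n / n.factorial * ∫ u in (0 : ℝ)..δ, (u : ℂ) ^ ((n : ℂ) - z) := by
        rw [integral_cpow (Or.inl hre), ofReal_zero, zero_cpow (by rwa [sub_add_eq_add_sub]),
          sub_zero, sub_add_eq_add_sub, add_sub_assoc, cpow_add _ _ hδ', cpow_natCast, headTerm]
        ring
    _ = ∫ u in (0 : ℝ)..δ, (u : ℂ) ^ (-z) * ((-c * u) ^ n / n.factorial) := by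
        rw [← intervalIntegral.integral_const_mul]
        refine integral_congr_ae (ae_of_all _ fun u hu => ?_)
        have hu : (u : ℂ) ≠ 0 := ofReal_ne_zero.2 (by
          rw [uIoc_of_le hδ.le] at hu; exact hu.1.ne')
        rw [sub_eq_add_neg, cpow_add _ _ hu, cpow_natCast]
        ring

theorem tailIntegral_add_headSeries_of_re_lt_one (hc : 0 < c) (hδ : 0 < δ) (hz : z.re < 1) :
    tailIntegral c δ z + headSeries c δ z = (c : ℂ) ^ (z - 1) * Gamma (1 - z) := by
  have hGamma := integral_cpow_mul_exp_neg_mul_Ioi (a := 1 - z) (by simpa) hc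
  have hint : IntervalIntegrable (fun u : ℝ => (u : ℂ) ^ (-z) * exp (-c * u)) volume 0 δ :=
    (intervalIntegrable_cpow' (by simpa)).mul_continuousOn (by fun_prop)
  rw [one_div, inv_cpow _ _ (by simpa [arg_ofReal_of_nonneg hc.le] using Real.pi_pos.ne),
    ← cpow_neg, neg_sub, sub_sub_cancel_left] at hGamma
  simp_rw [← neg_mul] at hGamma
  rw [← hGamma, ← integral_interval_add_Ioi' hint (integrableOn_Ioi_ofReal_cpow_mul_exp hc hδ _),
    add_comm, headSeries, (hasSum_headTerm hδ hz).tsum_eq, tailIntegral]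

theorem tailIntegral_add_headSeries (hc : 0 < c) (hδ : 0 < δ) (hz : ∀ n : ℕ, z ≠ n + 1) :
    tailIntegral c δ z + headSeries c δ z = (c : ℂ) ^ (z - 1) * Gamma (1 - z) := by
  obtain ⟨N, hN⟩ := exists_nat_gt z.re
  induction N generalizing z with
  | zero => exact tailIntegral_add_headSeries_of_re_lt_one hc hδ (hN.trans (by norm_num))
  | succ N ih =>
    have hz1 : 1 - z ≠ 0 := sub_ne_zero.2 (by simpa using (hz 0).symm)
    have hprev := ih (z := z - 1)
      (fun n => by simpa [sub_eq_iff_eq_add, add_assoc] using hz (n + 1))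
      (by simp only [Nat.cast_add, Nat.cast_one, sub_re, one_re] at hN ⊢; linarith)
    have hrec : (1 - z) * (tailIntegral c δ z + headSeries c δ z) =
        c * (tailIntegral c δ (z - 1) + headSeries c δ (z - 1)) := by
      linear_combination tailIntegral_recurrence hc hδ z + headSeries_recurrence hδ.ne' hz
    rw [hprev, show 1 - (z - 1) = (1 - z) + 1 by ring, Gamma_add_one _ hz1] at hrec
    refine mul_left_cancel₀ hz1 (hrec.trans ?_)
    have hcpow : (c : ℂ) ^ (z - 1) = c ^ (z - 1 - 1) * c := by
      have hc' : (c : ℂ) ≠ 0 := ofReal_ne_zero.2 hc.ne'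
      rw [cpow_sub (z - 1) 1 hc', cpow_one, div_mul_cancel₀ _ hc']
    rw [hcpow]
    ring

theorem integral_Ioi_exp_neg_mul_log_add (hδ : 0 < δ) (θ : ℂ) :
    ∫ u in Ioi δ, exp (-z * (Real.log u + θ)) * exp (-c * u) =
      exp (-z * θ) * tailIntegral c δ z := by
  rw [tailIntegral, ← MeasureTheory.integral_const_mul]
  refine setIntegral_congr_fun measurableSet_Ioi fun u hu => ?_
  rw [ofReal_cpow_eq_exp_mul_log (hδ.trans hu), mul_add, exp_add]
  ring

theorem circle_integrand_series_term (hδ : 0 < δ) (n : ℕ) (φ : ℝ) :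
    exp (-z * (Real.log δ + φ * I)) * (I * δ * exp (φ * I)) *
        ((c * δ * exp (φ * I)) ^ n / n.factorial) =
      I * (c * δ : ℂ) ^ n / n.factorial * (δ : ℂ) ^ (1 - z) * exp ((n + 1 - z) * φ * I) := by
  have hδexp : (δ : ℂ) = exp (Real.log δ) := by rw [← ofReal_exp, Real.exp_log hδ]
  have hexp : exp ((1 - z) * Real.log δ) * exp ((n + 1 - z) * φ * I) =
      δ * (exp (-z * (Real.log δ + φ * I)) * exp (φ * I) * exp (n * (φ * I))) := by
    rw [hδexp]
    simp only [← exp_add]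
    ring_nf
  rw [ofReal_cpow_eq_exp_mul_log hδ, mul_pow, ← exp_nat_mul]
  linear_combination -(I * (c * δ : ℂ) ^ n / n.factorial) * hexp

theorem hasSum_integral_circle (hδ : 0 < δ) (z : ℂ) :
    HasSum (fun n : ℕ => I * (c * δ : ℂ) ^ n / n.factorial * (δ : ℂ) ^ (1 - z) *
        ∫ φ in (-π)..π, exp ((n + 1 - z) * φ * I))
      (∫ φ in (-π)..π, exp (-z * (Real.log δ + φ * I)) * exp (c * δ * exp (φ * I)) *
        (I * δ * exp (φ * I))) := by
  have := hasSum_intervalIntegral_mul_exp (a := -π) (b := π)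
    (g := fun φ : ℝ => exp (-z * (Real.log δ + φ * I)) * (I * δ * exp (φ * I)))
    (h := fun φ : ℝ => c * δ * exp (φ * I)) ((by fun_prop : Continuous _).intervalIntegrable _ _)
    (by fun_prop)
  convert this using 1
  · ext n
    simp only [circle_integrand_series_term hδ, intervalIntegral.integral_const_mul]
  · congr 1
    ext φ
    ring

theorem integral_circle_eq_of_forall_ne (hδ : 0 < δ) (hz : ∀ n : ℕ, z ≠ n + 1) :
    ∫ φ in (-π)..π, exp (-z * (Real.log δ + φ * I)) * exp (c * δ * exp (φ * I)) *
        (I * δ * exp (φ * I)) = 2 * I * sin (π * z) * headSeries c δ z := by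
  rw [← (hasSum_integral_circle hδ z).tsum_eq, headSeries, ← tsum_mul_left]
  congr 1
  ext n
  have hne : (n : ℂ) + 1 - z ≠ 0 := fun h => hz n (by linear_combination -h)
  have hsin : sin (π * (n + 1 - z)) = (-1) ^ n * sin (π * z) := by
    have := sin_antiperiodic.nat_mul_sub_eq (x := π * z) (n + 1)
    rw [sin_neg] at this
    rw [show (π : ℂ) * (n + 1 - z) = ((n + 1 : ℕ) : ℂ) * π - π * z by push_cast; ring, this]
    ring
  rw [integral_exp_mul_I hne, hsin, headTerm]
  field_simp
  ring

theorem integral_circle_eq_of_eq_natCast_add_one (hδ : 0 < δ) (k : ℕ) :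
    ∫ φ in (-π)..π, exp (-(k + 1 : ℂ) * (Real.log δ + φ * I)) * exp (c * δ * exp (φ * I)) *
        (I * δ * exp (φ * I)) = 2 * π * I * (c : ℂ) ^ k / k.factorial := by
  rw [← (hasSum_integral_circle hδ _).tsum_eq, tsum_eq_single k fun n hn => ?_]
  · have hδ' : (δ : ℂ) ≠ 0 := ofReal_ne_zero.2 hδ.ne'
    simp only [sub_self, zero_mul, exp_zero, intervalIntegral.integral_const, real_smul,
      show (1 : ℂ) - (k + 1) = -(k : ℕ) by ring, cpow_neg, cpow_natCast]
    push_cast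
    field_simp
    ring
  · have hne : (n : ℂ) + 1 - (k + 1) ≠ 0 := by
      rw [add_sub_add_right_eq_sub, sub_ne_zero]
      exact_mod_cast hn
    rw [integral_exp_mul_I hne, show (π : ℂ) * (n + 1 - (k + 1)) = ((n - k : ℤ) : ℂ) * π by
      push_cast; ring, sin_int_mul_pi]
    simp

end Hankel

theorem stmt11 (c : ℝ) (hc : 0 < c) (z : ℂ) (δ : ℝ) (hδ : 0 < δ) :
    (1 / (2 * (Real.pi : ℂ) * Complex.I)) *
      ((∫ u in Set.Ioi δ,
          Complex.exp (-z * ((Real.log u : ℂ) - (Real.pi : ℂ) * Complex.I)) *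
            Complex.exp (-(c : ℂ) * u))
        + (∫ φ in (-Real.pi)..Real.pi,
            Complex.exp (-z * ((Real.log δ : ℂ) + (φ : ℂ) * Complex.I)) *
              Complex.exp ((c : ℂ) * (δ : ℂ) * Complex.exp ((φ : ℂ) * Complex.I)) *
              (Complex.I * (δ : ℂ) * Complex.exp ((φ : ℂ) * Complex.I)))
        - ∫ u in Set.Ioi δ,
            Complex.exp (-z * ((Real.log u : ℂ) + (Real.pi : ℂ) * Complex.I)) *
              Complex.exp (-(c : ℂ) * u))
      = (c : ℂ) ^ (z - 1) / Complex.Gamma z := by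
  have hlower := Hankel.integral_Ioi_exp_neg_mul_log_add (c := c) (z := z) hδ (-(π * I))
  have hupper := Hankel.integral_Ioi_exp_neg_mul_log_add (c := c) (z := z) hδ (π * I)
  simp_rw [← sub_eq_add_neg] at hlower
  rw [hlower, hupper, add_sub_right_comm, ← sub_mul, show -z * -(π * I) = (π * z) * I by ring,
    show -z * (π * I) = -(π * z) * I by ring, Hankel.exp_mul_I_sub_exp_neg_mul_I]
  by_cases hz : ∃ k : ℕ, z = k + 1
  · obtain ⟨k, rfl⟩ := hz
    rw [Hankel.integral_circle_eq_of_eq_natCast_add_one hδ, add_sub_cancel_right, cpow_natCast,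
      Gamma_nat_eq_factorial, show (π : ℂ) * (k + 1) = ((k + 1 : ℕ) : ℂ) * π by push_cast; ring,
      sin_nat_mul_pi, mul_zero, zero_mul, zero_add]
    field_simp
  · push Not at hz
    rw [Hankel.integral_circle_eq_of_forall_ne hδ hz, ← mul_add,
      Hankel.tailIntegral_add_headSeries hc hδ hz]
    calc _ = (c : ℂ) ^ (z - 1) * (sin (π * z) * Gamma (1 - z)) / π := by field_simp
      _ = _ := by rw [Hankel.sin_mul_Gamma_one_sub hz, div_eq_mul_inv (π : ℂ)]; field_simp
end

section
/- Let α be a complex number with |α| > 0, choose log α with Im(log α) ∈ (−π, π], and let s ∈ ℂ with Re(s) > log|α|. Then the regularized product over ν ∈ ℤ of (s − (log α + 2πiν)) equals 1 − α e^{−s}. -/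
/-!
Put `a = s - log α`, so that `0 < re a`. The function `t ↦ t ^ (w - 1) * exp (-a t)` on
`t > 0` has Fourier transform `x ↦ Γ(w) (a + 2πix) ^ (-w)`, so for `re w > 1` Poisson summation
gives the Lipschitz formula
`Γ(w) ∑_ν (a + 2πiν) ^ (-w) = ∑_{n ≥ 1} n ^ (w - 1) e ^ (-a n) = Li_{1-w}(e ^ (-a))`.
The right-hand side is entire in `w` and `1/Γ` vanishes at `0` with derivative `1`, so by analytic
continuation `Z'(0) = Li₁(e ^ (-a)) = -log (1 - e ^ (-a))`, and `e ^ (-a) = α e ^ (-s)`.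
-/

open MeasureTheory Set Filter Topology FourierTransform Asymptotics Complex
open scoped Real

noncomputable def polylog (s q : ℂ) : ℂ := ∑' n : ℕ, ((n : ℂ) + 1) ^ (-s) * q ^ (n + 1)

lemma norm_natCast_add_one_cpow (n : ℕ) (s : ℂ) :
    ‖((n : ℂ) + 1) ^ s‖ = ((n : ℝ) + 1) ^ s.re := by
  rw [← Nat.cast_succ, Complex.norm_natCast_cpow_of_pos n.succ_pos, Nat.cast_succ]

lemma differentiableOn_polylog {q : ℂ} (hq : ‖q‖ < 1) (k : ℕ) :
    DifferentiableOn ℂ (fun s => polylog s q) {s | -k < s.re} := by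
  have hsum : Summable fun n : ℕ => ((n : ℝ) + 1) ^ k * ‖q‖ ^ (n + 1) := by
    have := (summable_nat_add_iff (f := fun n : ℕ => (n : ℝ) ^ k * ‖q‖ ^ n) 1).mpr
      (summable_pow_mul_geometric_of_norm_lt_one k (by rwa [norm_norm]))
    simpa using this
  have hopen : IsOpen {s : ℂ | -k < s.re} := isOpen_lt continuous_const continuous_re
  refine (tendstoUniformlyOn_tsum hsum fun n s hs => ?_).tendstoLocallyUniformlyOn
    |>.differentiableOn (Eventually.of_forall fun t => ?_) hopen
  · rw [norm_mul, norm_pow, norm_natCast_add_one_cpow, ← Real.rpow_natCast _ k]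
    refine mul_le_mul_of_nonneg_right (Real.rpow_le_rpow_of_exponent_le ?_ ?_) (by positivity)
    · linarith [n.cast_nonneg (α := ℝ)]
    · rw [neg_re]; linarith [hs.out]
  · exact DifferentiableOn.fun_sum fun n _ => ((differentiable_neg.const_cpow
      (Or.inl (Nat.cast_add_one_ne_zero n))).mul_const _).differentiableOn

lemma differentiable_polylog {q : ℂ} (hq : ‖q‖ < 1) :
    Differentiable ℂ fun s => polylog s q := by
  intro s
  obtain ⟨k, hk⟩ := exists_nat_gt (-s.re)
  exact (differentiableOn_polylog hq k).differentiableAt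
    ((isOpen_lt continuous_const continuous_re).mem_nhds (show -(k : ℝ) < s.re by linarith))

lemma polylog_one {q : ℂ} (hq : ‖q‖ < 1) : polylog 1 q = -log (1 - q) := by
  have h := (hasSum_nat_add_iff' 1).mpr (hasSum_taylorSeries_neg_log hq)
  simp only [Finset.range_one, Finset.sum_singleton, pow_zero, Nat.cast_zero, div_zero,
    sub_zero] at h
  refine (h.congr_fun fun n => ?_).tsum_eq
  push_cast
  rw [cpow_neg_one, div_eq_inv_mul]

lemma norm_cpow_mul_exp_neg_mul {t : ℝ} (ht : 0 < t) (w b : ℂ) :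
    ‖(t : ℂ) ^ (w - 1) * cexp (-b * t)‖ = t ^ (w.re - 1) * rexp (-b.re * t) := by
  rw [norm_mul, norm_cpow_eq_rpow_re_of_pos ht, norm_exp, sub_re, one_re]
  simp [mul_re]

lemma continuousOn_cpow_mul_exp_neg_mul (w b : ℂ) :
    ContinuousOn (fun t : ℝ => (t : ℂ) ^ (w - 1) * cexp (-b * t)) (Ioi 0) := fun t ht =>
  ((continuousAt_ofReal_cpow_const t _ (Or.inr ht.ne')).mul
    (by fun_prop)).continuousWithinAt

lemma integrableOn_cpow_mul_exp_neg_mul {w b : ℂ} (hw : 0 < w.re) (hb : 0 < b.re) :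
    IntegrableOn (fun t : ℝ => (t : ℂ) ^ (w - 1) * cexp (-b * t)) (Ioi 0) := by
  refine Integrable.mono' ?_
    ((continuousOn_cpow_mul_exp_neg_mul w b).aestronglyMeasurable measurableSet_Ioi)
    ((ae_restrict_mem measurableSet_Ioi).mono fun t ht =>
      (norm_cpow_mul_exp_neg_mul ht w b).le)
  simpa [IntegrableOn] using
    integrableOn_rpow_mul_exp_neg_mul_rpow (by linarith : -1 < w.re - 1) one_pos hb

lemma differentiableOn_integral_cpow_mul_exp_neg_mul {w : ℂ} (hw : 0 < w.re) :
    DifferentiableOn ℂ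
      (fun b : ℂ => ∫ t in Ioi (0 : ℝ), (t : ℂ) ^ (w - 1) * cexp (-b * t)) {b | 0 < b.re} := by
  intro b hb
  have hε : 0 < b.re / 2 := half_pos hb
  refine (hasDerivAt_integral_of_dominated_loc_of_deriv_le (μ := volume.restrict (Ioi 0))
    -- the `b`-derivative `-t ^ w * exp (-b t)` is written in the shape of the integrand at `w + 1`
    (F' := fun x (t : ℝ) => -((t : ℂ) ^ ((w + 1) - 1) * cexp (-x * t)))
    (bound := fun t : ℝ => t ^ ((w + 1).re - 1) * rexp (-(b.re / 2) * t))
    (Metric.ball_mem_nhds b hε)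
    (Eventually.of_forall fun x =>
      (continuousOn_cpow_mul_exp_neg_mul w x).aestronglyMeasurable measurableSet_Ioi)
    (integrableOn_cpow_mul_exp_neg_mul hw hb)
    ((continuousOn_cpow_mul_exp_neg_mul _ b).aestronglyMeasurable measurableSet_Ioi).neg
    ?_ ?_ ?_).2.differentiableAt.differentiableWithinAt
  · filter_upwards [ae_restrict_mem measurableSet_Ioi] with t ht x hx
    have hxre : b.re / 2 ≤ x.re := by
      have := (abs_re_le_norm (x - b)).trans (mem_ball_iff_norm.mp hx).le
      rw [sub_re] at this
      linarith [(abs_le.mp this).1]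
    rw [norm_neg, norm_cpow_mul_exp_neg_mul ht]
    exact mul_le_mul_of_nonneg_left (Real.exp_le_exp.mpr (by nlinarith [ht.out]))
      (Real.rpow_nonneg ht.out.le _)
  · simpa [IntegrableOn] using
      integrableOn_rpow_mul_exp_neg_mul_rpow (by simp; linarith : -1 < (w + 1).re - 1) one_pos hε
  · filter_upwards [ae_restrict_mem measurableSet_Ioi] with t ht x _
    have hcpow : (t : ℂ) ^ (w + 1 - 1) = (t : ℂ) ^ (w - 1) * t := by
      rw [add_sub_cancel_right]
      conv_lhs => rw [← sub_add_cancel w 1]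
      rw [cpow_add _ _ (ofReal_ne_zero.mpr ht.out.ne'), cpow_one]
    rw [hcpow]
    have := ((hasDerivAt_id x).neg.mul_const (t : ℂ)).cexp.const_mul ((t : ℂ) ^ (w - 1))
    simp only [Pi.neg_apply, id] at this
    exact this.congr_deriv (by ring)

lemma integral_cpow_mul_exp_neg_mul_Ioi_of_re_pos {w b : ℂ} (hw : 0 < w.re) (hb : 0 < b.re) :
    ∫ t in Ioi (0 : ℝ), (t : ℂ) ^ (w - 1) * cexp (-b * t) = Gamma w * b ^ (-w) := by
  have hU : IsOpen {b : ℂ | 0 < b.re} := isOpen_lt continuous_const continuous_re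
  have hG : DifferentiableOn ℂ (fun b : ℂ => Gamma w * b ^ (-w)) {b | 0 < b.re} := fun b hb =>
    ((differentiableAt_id.cpow_const (Or.inl hb)).const_mul _).differentiableWithinAt
  refine ((differentiableOn_integral_cpow_mul_exp_neg_mul hw).analyticOnNhd hU)
    |>.eqOn_of_preconnected_of_frequently_eq (hG.analyticOnNhd hU)
      (convex_halfSpace_re_gt 0).isPreconnected (show (0 : ℝ) < (1 : ℂ).re by simp) ?_ hb
  have hreal : ∀ r : ℝ, 0 < r →
      ∫ t in Ioi (0 : ℝ), (t : ℂ) ^ (w - 1) * cexp (-r * t) = Gamma w * (r : ℂ) ^ (-w) := by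
    intro r hr
    simp_rw [neg_mul, integral_cpow_mul_exp_neg_mul_Ioi hw hr, one_div,
      inv_cpow _ _ (by rw [arg_ofReal_of_nonneg hr.le]; exact Real.pi_ne_zero.symm), ← cpow_neg,
      mul_comm]
  have hofReal : Tendsto ((↑) : ℝ → ℂ) (𝓝[≠] 1) (𝓝[≠] 1) :=
    tendsto_nhdsWithin_of_tendsto_nhds_of_eventually_within _
      ((continuous_ofReal.tendsto' 1 1 ofReal_one).mono_left nhdsWithin_le_nhds)
      (eventually_nhdsWithin_of_forall fun r hr => by simpa using hr)
  exact hofReal.frequently ((eventually_nhdsWithin_of_eventually_nhds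
    (lt_mem_nhds one_pos)).frequently.mono fun r hr => hreal r hr)

noncomputable def gammaKernel (w a : ℂ) : ℝ → ℂ :=
  indicator (Ioi 0) fun t => (t : ℂ) ^ (w - 1) * cexp (-a * t)

lemma gammaKernel_eq_max {w : ℂ} (hw : w ≠ 1) (a : ℂ) (t : ℝ) :
    gammaKernel w a t = ((max t 0 : ℝ) : ℂ) ^ (w - 1) * cexp (-a * t) := by
  rcases lt_or_ge 0 t with ht | ht
  · rw [gammaKernel, indicator_of_mem (mem_Ioi.mpr ht), max_eq_left ht.le]
  · rw [gammaKernel, indicator_of_notMem (notMem_Ioi.mpr ht), max_eq_right ht, ofReal_zero,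
      zero_cpow (sub_ne_zero.mpr hw), zero_mul]

lemma continuous_gammaKernel {w : ℂ} (hw : 1 < w.re) (a : ℂ) :
    Continuous (gammaKernel w a) := by
  have hw1 : w ≠ 1 := fun h => by simp [h] at hw
  rw [funext (gammaKernel_eq_max hw1 a)]
  refine Continuous.mul (continuous_iff_continuousAt.mpr fun t => ?_) (by fun_prop)
  exact (continuousAt_ofReal_cpow_const _ _ (Or.inl (by rw [sub_re, one_re]; linarith))).comp
    (continuous_id.max continuous_const).continuousAt

lemma gammaKernel_isBigO (w : ℂ) {a : ℂ} (ha : 0 < a.re) (b : ℝ) :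
    gammaKernel w a =O[cocompact ℝ] fun t => |t| ^ (-b) := by
  rw [cocompact_eq_atBot_atTop]
  refine IsBigO.sup ?_ ?_
  · refine EventuallyEq.trans_isBigO ?_ (isBigO_zero _ _)
    filter_upwards [eventually_le_atBot 0] with t ht
    exact indicator_of_notMem (notMem_Ioi.mpr ht) _
  · refine isBigO_norm_left.mp <| ((isBigO_refl (fun t : ℝ => t ^ (w.re - 1)) atTop).mul
      (isLittleO_exp_neg_mul_rpow_atTop ha (-b - (w.re - 1))).isBigO).congr' ?_ ?_
    · filter_upwards [eventually_gt_atTop 0] with t ht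
      rw [gammaKernel, indicator_of_mem (mem_Ioi.mpr ht), norm_cpow_mul_exp_neg_mul ht]
    · filter_upwards [eventually_gt_atTop 0] with t ht
      rw [← Real.rpow_add ht, abs_of_pos ht]
      ring_nf

lemma fourier_gammaKernel {w a : ℂ} (hw : 0 < w.re) (ha : 0 < a.re) (x : ℝ) :
    𝓕 (gammaKernel w a) x = Gamma w * (a + 2 * π * I * x) ^ (-w) := by
  have hre : 0 < (a + 2 * π * I * x).re := by simpa using ha
  rw [Real.fourier_real_eq_integral_exp_smul,
    ← integral_cpow_mul_exp_neg_mul_Ioi_of_re_pos hw hre,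
    ← integral_indicator measurableSet_Ioi]
  congr 1 with t
  rcases lt_or_ge 0 t with ht | ht
  · rw [gammaKernel, smul_eq_mul, indicator_of_mem (mem_Ioi.mpr ht),
      indicator_of_mem (mem_Ioi.mpr ht), mul_left_comm, ← exp_add]
    push_cast
    ring_nf
  · rw [gammaKernel, indicator_of_notMem (notMem_Ioi.mpr ht),
      indicator_of_notMem (notMem_Ioi.mpr ht), smul_zero]

lemma tsum_gammaKernel_intCast (w a : ℂ) :
    ∑' n : ℤ, gammaKernel w a n = polylog (1 - w) (cexp (-a)) := by
  have hsupp : (Function.support fun n : ℤ => gammaKernel w a n) ⊆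
      range fun n : ℕ => (n : ℤ) + 1 := by
    intro m hm
    by_contra hrange
    refine hm (indicator_of_notMem (notMem_Ioi.mpr ?_) _)
    have : m ≤ 0 := by
      by_contra! hpos
      exact hrange ⟨(m - 1).toNat, show ((m - 1).toNat : ℤ) + 1 = m by omega⟩
    exact_mod_cast this
  have hinj : Function.Injective fun n : ℕ => (n : ℤ) + 1 := fun m n h => by simpa using h
  rw [← hinj.tsum_eq hsupp, polylog]
  congr 1 with n
  have hpos : (0 : ℝ) < ((n : ℤ) + 1 : ℤ) := by positivity
  rw [gammaKernel, indicator_of_mem (mem_Ioi.mpr hpos), ← exp_nat_mul]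
  push_cast
  ring_nf

lemma norm_cpow_neg_le {z : ℂ} (hz : z ≠ 0) (w : ℂ) :
    ‖z ^ (-w)‖ ≤ rexp (π * |w.im|) * ‖z‖ ^ (-w.re) := by
  rw [norm_cpow_of_ne_zero hz, neg_re, neg_im, div_eq_inv_mul, ← Real.exp_neg]
  refine mul_le_mul_of_nonneg_right (Real.exp_le_exp.mpr ?_) (by positivity)
  calc -(z.arg * -w.im) ≤ |z.arg| * |w.im| := by
        rw [mul_neg, neg_neg, ← abs_mul]; exact le_abs_self _
    _ ≤ π * |w.im| := by gcongr; exact abs_arg_le_pi z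

lemma abs_le_norm_add_two_pi_I_mul {a : ℂ} {x : ℝ} (hx : ‖a‖ ≤ |x|) :
    |x| ≤ ‖a + 2 * π * I * x‖ := by
  have h : ‖2 * π * I * x‖ = 2 * π * |x| := by
    simp [Real.pi_pos.le, abs_of_nonneg, mul_assoc]
  have := norm_sub_le_norm_sub_add_norm_sub (2 * π * I * x) (a + 2 * π * I * x) 0
  simp only [sub_zero, sub_add_cancel_right, norm_neg, h] at this
  nlinarith [Real.pi_gt_three, abs_nonneg x, norm_sub_rev (2 * π * I * x) (a + 2 * π * I * x)]

lemma summable_cpow_add_two_pi_I_mul {a w : ℂ} (ha : 0 < a.re) (hw : 1 < w.re) :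
    Summable fun n : ℤ => (a + 2 * π * I * n) ^ (-w) := by
  have hlarge : ∀ᶠ n : ℤ in cofinite, max ‖a‖ 1 ≤ |(n : ℝ)| :=
    (tendsto_norm_cocompact_atTop.comp Int.tendsto_coe_cofinite).eventually_ge_atTop _
  refine ((Real.summable_abs_int_rpow hw).mul_left (rexp (π * |w.im|)))
    |>.of_norm_bounded_eventually ?_
  filter_upwards [hlarge] with n hn
  have hn1 : 0 < |(n : ℝ)| := by linarith [le_max_right ‖a‖ 1]
  have hne : a + 2 * π * I * n ≠ 0 := fun h => by
    have := congrArg re h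
    simp at this
    linarith
  refine (norm_cpow_neg_le hne w).trans (mul_le_mul_of_nonneg_left ?_ (Real.exp_pos _).le)
  exact Real.rpow_le_rpow_of_nonpos hn1
    (abs_le_norm_add_two_pi_I_mul ((le_max_left _ _).trans hn)) (by linarith)

theorem Gamma_mul_tsum_cpow_add_two_pi_I_mul {a w : ℂ} (ha : 0 < a.re) (hw : 1 < w.re) :
    Gamma w * ∑' n : ℤ, (a + 2 * π * I * n) ^ (-w) = polylog (1 - w) (cexp (-a)) := by
  have hfourier (n : ℤ) :
      𝓕 (gammaKernel w a) n = Gamma w * (a + 2 * π * I * n) ^ (-w) := by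
    rw [fourier_gammaKernel (by linarith) ha, ofReal_intCast]
  have hpoisson := Real.tsum_eq_tsum_fourier_of_rpow_decay_of_summable
    (continuous_gammaKernel hw a) one_lt_two (gammaKernel_isBigO w ha 2)
    (by simpa only [hfourier] using (summable_cpow_add_two_pi_I_mul ha hw).mul_left _) 0
  simp only [zero_add, QuotientAddGroup.mk_zero, fourier_eval_zero, mul_one, hfourier]
    at hpoisson
  rw [← tsum_gammaKernel_intCast, hpoisson, tsum_mul_left]

lemma eq_inv_Gamma_mul_polylog_of_hasSum {a w z : ℂ} (ha : 0 < a.re) (hw : 1 < w.re)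
    (h : HasSum (fun ν : ℤ => (a - 2 * π * I * ν) ^ (-w)) z) :
    z = (Gamma w)⁻¹ * polylog (1 - w) (cexp (-a)) := by
  have hsum : HasSum (fun n : ℤ => (a + 2 * π * I * n) ^ (-w)) z := by
    refine ((Equiv.neg ℤ).hasSum_iff.mpr h).congr_fun fun n => ?_
    simp only [Function.comp_apply, Equiv.neg_apply, Int.cast_neg]
    ring_nf
  rw [← hsum.tsum_eq, ← Gamma_mul_tsum_cpow_add_two_pi_I_mul ha hw,
    inv_mul_cancel_left₀ (Gamma_ne_zero_of_re_pos (by linarith))]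

lemma hasDerivAt_inv_Gamma_mul_zero {g : ℂ → ℂ} (hg : DifferentiableAt ℂ g 0) :
    HasDerivAt (fun z => (Gamma z)⁻¹ * g z) (g 0) 0 := by
  have hinv : HasDerivAt (fun z => (Gamma z)⁻¹) 1 0 := by
    rw [funext one_div_Gamma_eq_self_mul_one_div_Gamma_add_one]
    simpa [Pi.mul_def, Function.comp_def] using (hasDerivAt_id (0 : ℂ)).mul
      ((differentiable_one_div_Gamma.comp (differentiable_id.add_const 1)) 0).hasDerivAt
  simpa [Pi.mul_def] using hinv.mul hg.hasDerivAt

lemma eqOn_re_gt_of_eqOn_re_gt {Z F : ℂ → ℂ} {δ c : ℝ}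
    (hZ : DifferentiableOn ℂ Z {w | δ < w.re}) (hF : DifferentiableOn ℂ F {w | δ < w.re})
    (h : EqOn Z F {w | c < w.re}) : EqOn Z F {w | δ < w.re} := by
  have hU : IsOpen {w : ℂ | δ < w.re} := isOpen_lt continuous_const continuous_re
  set w₀ : ℂ := ((max δ c + 1 : ℝ) : ℂ)
  have hw₀ : ∀ x, x ≤ max δ c → x < w₀.re := fun x hx => by simp [w₀]; linarith
  refine (hZ.analyticOnNhd hU).eqOn_of_preconnected_of_eventuallyEq (hF.analyticOnNhd hU)
    (convex_halfSpace_re_gt δ).isPreconnected (hw₀ δ (le_max_left δ c)) ?_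
  have hc : {w : ℂ | c < w.re} ∈ 𝓝 w₀ :=
    (isOpen_lt continuous_const continuous_re).mem_nhds (hw₀ c (le_max_right δ c))
  filter_upwards [hc] with w hw using h hw

theorem stmt17 (α : ℂ) (hα : α ≠ 0) (s : ℂ)
    (hs : Real.log ‖α‖ < s.re)
    (Z : ℂ → ℂ) (δ : ℝ) (hδ : 0 < δ)
    (hhol : DifferentiableOn ℂ Z {w : ℂ | -δ < w.re})
    (heq : ∀ w : ℂ, 1 < w.re →
      HasSum (fun ν : ℤ =>
        (s - Complex.log α - 2 * (Real.pi : ℂ) * Complex.I * (ν : ℂ)) ^ (-w)) (Z w)) :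
    Complex.exp (-(deriv Z 0)) = 1 - α * Complex.exp (-s) := by
  have ha : 0 < (s - log α).re := by rw [sub_re, log_re]; linarith
  have hqα : cexp (-(s - log α)) = α * cexp (-s) := by
    rw [neg_sub, exp_sub, exp_log hα, exp_neg, div_eq_mul_inv]
  set q := cexp (-(s - log α))
  have hq : ‖q‖ < 1 := by rw [norm_exp, neg_re, Real.exp_lt_one_iff]; linarith
  have hpolylog : Differentiable ℂ fun w => polylog (1 - w) q :=
    (differentiable_polylog hq).comp (by fun_prop)
  set F : ℂ → ℂ := fun w => (Gamma w)⁻¹ * polylog (1 - w) q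
  have hZF : Z =ᶠ[𝓝 0] F :=
    (eqOn_re_gt_of_eqOn_re_gt hhol (differentiable_one_div_Gamma.mul hpolylog).differentiableOn
      fun w hw => eq_inv_Gamma_mul_polylog_of_hasSum ha hw (heq w hw)).eventuallyEq_of_mem
    ((isOpen_lt continuous_const continuous_re).mem_nhds (by simpa using hδ))
  have hF : HasDerivAt F (polylog 1 q) 0 := by
    simpa using hasDerivAt_inv_Gamma_mul_zero (hpolylog 0)
  have h1q : 1 - q ≠ 0 := sub_ne_zero.mpr fun h => by simp [← h] at hq
  rw [hZF.deriv_eq, hF.deriv, polylog_one hq, neg_neg, exp_log h1q, hqα]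
end
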